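/- arXiv:2103.14352 — 6 statements merged into one kernel-verified Lean document; each statement's English description precedes it below -/
import Mathlib

section
/- For every ω in the piecewise polynomial space V_h^k (with periodic trace identification), the central-flux bilinear operator satisfies L^c(ω,ω) = 0. -/
open Polynomial Set

noncomputable section

namespace FW

variable {N : ℕ}

/-- Minus trace `ω⁻` at interface `j+1/2` (right end of cell `j`). -/
def trM (x : Fin (N + 1) → ℝ) (ω : Fin N → Polynomial ℝ) (j : Fin N) : ℝ :=
  (ω j).eval (x j.succ)

/-- Plus trace `ω⁺` at interface `j+1/2` (left end of the next cell, cyclically). -/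
def trP [NeZero N] (x : Fin (N + 1) → ℝ) (ω : Fin N → Polynomial ℝ) (j : Fin N) : ℝ :=
  (ω (j + 1)).eval (x (j + 1).castSucc)

/-- Average trace `{ω}`. -/
def trA [NeZero N] (x : Fin (N + 1) → ℝ) (ω : Fin N → Polynomial ℝ) (j : Fin N) : ℝ :=
  (trP x ω j + trM x ω j) / 2

/-- Jump `[ω]`. -/
def jmp [NeZero N] (x : Fin (N + 1) → ℝ) (ω : Fin N → Polynomial ℝ) (j : Fin N) : ℝ :=
  trP x ω j - trM x ω j

/-- Cell L² pairing `(u, φ)_{I_j}` of a piecewise polynomial with a test polynomial. -/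
def ipj (x : Fin (N + 1) → ℝ) (u : Fin N → Polynomial ℝ) (j : Fin N) (φ : Polynomial ℝ) : ℝ :=
  ∫ t in (x j.castSucc)..(x j.succ), (u j).eval t * φ.eval t

/-- Cell pairing `(f∘u, φ)_{I_j}`. -/
def ipfj (x : Fin (N + 1) → ℝ) (f : ℝ → ℝ) (u : Fin N → Polynomial ℝ) (j : Fin N)
    (φ : Polynomial ℝ) : ℝ :=
  ∫ t in (x j.castSucc)..(x j.succ), f ((u j).eval t) * φ.eval t

/-- Boundary pairing `⟨g, φ⟩_{I_j}` for interface values `g`. -/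
def bdj [NeZero N] (x : Fin (N + 1) → ℝ) (g : Fin N → ℝ) (j : Fin N) (φ : Polynomial ℝ) : ℝ :=
  g j * φ.eval (x j.succ) - g (j - 1) * φ.eval (x j.castSucc)

/-- Membership in the space `V_h^k` of piecewise polynomials of degree at most `k`. -/
def memV (k : ℕ) (ω : Fin N → Polynomial ℝ) : Prop :=
  ∀ j, (ω j).degree ≤ (k : WithBot ℕ)

/-- `L⁻(ω, φ)`. -/
def Lm [NeZero N] (x : Fin (N + 1) → ℝ) (ω φ : Fin N → Polynomial ℝ) : ℝ :=
  ∑ j, (-(ipj x ω j (derivative (φ j))) + bdj x (trM x ω) j (φ j))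

/-- `L⁺(ω, φ)`. -/
def Lp [NeZero N] (x : Fin (N + 1) → ℝ) (ω φ : Fin N → Polynomial ℝ) : ℝ :=
  ∑ j, (-(ipj x ω j (derivative (φ j))) + bdj x (trP x ω) j (φ j))

/-- `L^c(ω, φ)`. -/
def Lc [NeZero N] (x : Fin (N + 1) → ℝ) (ω φ : Fin N → Polynomial ℝ) : ℝ :=
  ∑ j, (-(ipj x ω j (derivative (φ j))) + bdj x (trA x ω) j (φ j))

/-- Godunov numerical flux. -/
def godunov (f : ℝ → ℝ) (c d : ℝ) : ℝ :=
  if c < d then sInf (f '' Set.Icc c d) else sSup (f '' Set.Icc d c)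

/-- Conservative numerical flux for `f(u) = u^p/p`, `F(u) = u^(p+1)/(p(p+1))`. -/
def consFlux (p : ℕ) (c d : ℝ) : ℝ :=
  if c = d then c ^ p / (p : ℝ)
  else (d ^ (p + 1) / ((p : ℝ) * ((p : ℝ) + 1)) - c ^ (p + 1) / ((p : ℝ) * ((p : ℝ) + 1))) / (d - c)

/-- Dissipative (Godunov-flux) nonlinear form `N^d`. -/
def Nd [NeZero N] (x : Fin (N + 1) → ℝ) (f : ℝ → ℝ) (ω φ : Fin N → Polynomial ℝ) : ℝ :=
  ∑ j, (-(ipfj x f ω j (derivative (φ j)))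
    + bdj x (fun i => godunov f (trM x ω i) (trP x ω i)) j (φ j))

/-- Conservative-flux nonlinear form `N^c`. -/
def Nc [NeZero N] (x : Fin (N + 1) → ℝ) (p : ℕ) (ω φ : Fin N → Polynomial ℝ) : ℝ :=
  ∑ j, (-(ipfj x (fun w => w ^ p / (p : ℝ)) ω j (derivative (φ j)))
    + bdj x (fun i => consFlux p (trM x ω i) (trP x ω i)) j (φ j))

end FW

/-! On each cell `∫ ω ω' = ((ω⁻_{j+1/2})² − (ω⁺_{j-1/2})²) / 2`, and with the central flux the squares
cancel against the boundary terms, leaving `ω⁻ω⁺/2` at the right interface minus the same at the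
left one. Summed over the periodic mesh this telescopes to zero. -/

theorem Polynomial.integral_eval_mul_eval_derivative (P : ℝ[X]) (a b : ℝ) :
    ∫ t in a..b, P.eval t * (derivative P).eval t = (P.eval b ^ 2 - P.eval a ^ 2) / 2 := by
  have hderiv (t : ℝ) :
      HasDerivAt (fun s => P.eval s ^ 2 / 2) (P.eval t * (derivative P).eval t) t :=
    (((P.hasDerivAt t).fun_pow 2).div_const 2).congr_deriv (by ring)
  rw [intervalIntegral.integral_eq_sub_of_hasDerivAt (fun t _ => hderiv t)
    ((P.continuous.mul (derivative P).continuous).intervalIntegrable a b), sub_div]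

theorem Fin.sum_sub_apply_sub_one_eq_zero {M : Type*} [AddCommGroup M] {N : ℕ} [NeZero N]
    (g : Fin N → M) : ∑ j, (g j - g (j - 1)) = 0 := by
  rw [Finset.sum_sub_distrib, sub_eq_zero]
  exact ((Equiv.subRight (1 : Fin N)).sum_comp g).symm

namespace FW

theorem Lc_self_summand_eq {N : ℕ} [NeZero N] (x : Fin (N + 1) → ℝ) (ω : Fin N → ℝ[X])
    (j : Fin N) :
    -(ipj x ω j (derivative (ω j))) + bdj x (trA x ω) j (ω j)
      = trM x ω j * trP x ω j / 2 - trM x ω (j - 1) * trP x ω (j - 1) / 2 := by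
  simp only [ipj, bdj, trA, trP, trM, Polynomial.integral_eval_mul_eval_derivative, sub_add_cancel]
  ring

end FW

theorem stmt0_general {N : ℕ} [NeZero N]
    (x : Fin (N + 1) → ℝ)
    (ω : Fin N → Polynomial ℝ) :
    FW.Lc x ω ω = 0 := by
  simp only [FW.Lc, FW.Lc_self_summand_eq]
  exact Fin.sum_sub_apply_sub_one_eq_zero _

theorem stmt0 {N : ℕ} [NeZero N] (hN : 1 ≤ N) (a b : ℝ) (hab : a < b)
    (x : Fin (N + 1) → ℝ) (hx : StrictMono x) (hxa : x 0 = a) (hxb : x (Fin.last N) = b)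
    (k : ℕ) (ω : Fin N → Polynomial ℝ) (hω : FW.memV k ω) :
    FW.Lc x ω ω = 0 :=
  stmt0_general x ω
end
end

section
/- For every ω in the piecewise polynomial space V_h^k (with periodic trace identification), the upwind bilinear operator satisfies L^+(ω,ω) = −(1/2) Σ_{j=1}^N ([ω]_{j+1/2})². -/
open Polynomial Set

noncomputable section

lemma poly_sq_integral (p : Polynomial ℝ) (a b : ℝ) :
    ∫ t in a..b, p.eval t * (Polynomial.derivative p).eval t
      = (p.eval b) ^ 2 / 2 - (p.eval a) ^ 2 / 2 := by
  have hd : ∀ t ∈ Set.uIcc a b, HasDerivAt (fun s => (p.eval s) ^ 2 / 2)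
      (p.eval t * (Polynomial.derivative p).eval t) t := by
    intro t _
    have h := ((p.hasDerivAt t).pow 2).div_const 2
    simpa [mul_comm, mul_assoc, mul_left_comm] using h
  rw [intervalIntegral.integral_eq_sub_of_hasDerivAt hd]
  exact (Continuous.mul (Polynomial.continuous p)
    (Polynomial.continuous _)).intervalIntegrable a b

theorem stmt1 {N : ℕ} [NeZero N] (hN : 1 ≤ N) (a b : ℝ) (hab : a < b)
    (x : Fin (N + 1) → ℝ) (hx : StrictMono x) (hxa : x 0 = a) (hxb : x (Fin.last N) = b)
    (k : ℕ) (ω : Fin N → Polynomial ℝ) (hω : FW.memV k ω) :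
    FW.Lp x ω ω = -(1/2) * ∑ j : Fin N, (FW.jmp x ω j) ^ 2 := by
  set M := FW.trM x ω with hM
  set P := FW.trP x ω with hP
  have hPprev : ∀ j : Fin N, P (j - 1) = (ω j).eval (x j.castSucc) := by
    intro j
    simp [hP, FW.trP, sub_add_cancel]
  have hsum : FW.Lp x ω ω
      = ∑ j : Fin N, (-(M j ^ 2 / 2 - P (j - 1) ^ 2 / 2)
          + (P j * M j - P (j - 1) * P (j - 1))) := by
    unfold FW.Lp
    refine Finset.sum_congr rfl fun j _ => ?_
    rw [FW.ipj, poly_sq_integral, FW.bdj, ← hPprev j]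
    rfl
  have hshift : ∑ j : Fin N, P (j - 1) ^ 2 = ∑ j : Fin N, P j ^ 2 :=
    Fintype.sum_equiv (Equiv.subRight (1 : Fin N)) _ _ (fun j => rfl)
  rw [hsum]
  have e : ∀ j : Fin N, (-(M j ^ 2 / 2 - P (j - 1) ^ 2 / 2)
      + (P j * M j - P (j - 1) * P (j - 1)))
      = -(1/2) * (P j - M j) ^ 2 + (P j ^ 2 / 2 - P (j - 1) ^ 2 / 2) := fun j => by ring
  simp only [e]
  rw [Finset.sum_add_distrib, Finset.sum_sub_distrib, ← Finset.sum_div, ← Finset.sum_div,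
    hshift, sub_self, add_zero]
  have hjmp : ∀ j : Fin N, FW.jmp x ω j = P j - M j := fun j => rfl
  simp only [hjmp]
  rw [Finset.mul_sum]
end
end

section
/- For all ω, φ in the piecewise polynomial space V_h^k (with periodic trace identification), L^+(ω,φ) + L^−(φ,ω) = 0. -/
open Polynomial Set

noncomputable section

lemma poly_ftc (P : Polynomial ℝ) (a b : ℝ) :
    ∫ t in a..b, (derivative P).eval t = P.eval b - P.eval a :=
  intervalIntegral.integral_eq_sub_of_hasDerivAt (fun t _ => P.hasDerivAt t)
    ((derivative P).continuous_aeval.intervalIntegrable a b)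

theorem stmt2 {N : ℕ} [NeZero N] (hN : 1 ≤ N) (a b : ℝ) (hab : a < b)
    (x : Fin (N + 1) → ℝ) (hx : StrictMono x) (hxa : x 0 = a) (hxb : x (Fin.last N) = b)
    (k : ℕ) (ω φ : Fin N → Polynomial ℝ)
    (hω : FW.memV k ω) (hφ : FW.memV k φ) :
    FW.Lp x ω φ + FW.Lm x φ ω = 0 := by
  unfold FW.Lp FW.Lm
  rw [← Finset.sum_add_distrib]
  have key : ∀ j : Fin N,
      (-(FW.ipj x ω j (derivative (φ j))) + FW.bdj x (FW.trP x ω) j (φ j))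
        + (-(FW.ipj x φ j (derivative (ω j))) + FW.bdj x (FW.trM x φ) j (ω j))
      = FW.trP x ω j * FW.trM x φ j - FW.trP x ω (j - 1) * FW.trM x φ (j - 1) := by
    intro j
    have hftc := poly_ftc (ω j * φ j) (x j.castSucc) (x j.succ)
    have hsplit : ∫ t in (x j.castSucc)..(x j.succ), (derivative (ω j * φ j)).eval t
        = (∫ t in (x j.castSucc)..(x j.succ), (ω j).eval t * (derivative (φ j)).eval t)
          + ∫ t in (x j.castSucc)..(x j.succ), (φ j).eval t * (derivative (ω j)).eval t := by
      rw [← intervalIntegral.integral_add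
        (by exact ((ω j).continuous_aeval.mul (derivative (φ j)).continuous_aeval).intervalIntegrable _ _)
        (by exact ((φ j).continuous_aeval.mul (derivative (ω j)).continuous_aeval).intervalIntegrable _ _)]
      apply intervalIntegral.integral_congr
      intro t _
      simp [Polynomial.derivative_mul]
      ring
    rw [hsplit] at hftc
    have h1 : FW.ipj x ω j (derivative (φ j)) + FW.ipj x φ j (derivative (ω j))
        = (ω j * φ j).eval (x j.succ) - (ω j * φ j).eval (x j.castSucc) := by
      unfold FW.ipj; linarith [hftc]
    have hsub : j - 1 + 1 = j := sub_add_cancel j 1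
    unfold FW.bdj FW.trP FW.trM
    rw [hsub]
    simp only [Polynomial.eval_mul] at h1
    linarith [h1]
  rw [Finset.sum_congr rfl (fun j _ => key j), Finset.sum_sub_distrib]
  have := Fintype.sum_equiv (Equiv.subRight (1 : Fin N))
    (fun j => FW.trP x ω (j - 1) * FW.trM x φ (j - 1))
    (fun j => FW.trP x ω j * FW.trM x φ j) (fun j => rfl)
  rw [this, sub_self]
end
end

section
/- For all ω, φ in the piecewise polynomial space V_h^k (with periodic trace identification), the central-flux operator is antisymmetric: L^c(ω,φ) + L^c(φ,ω) = 0. -/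
open Polynomial Set

noncomputable section

/-!
Integrating by parts on each cell, `(ω, φ′)_{I_j} + (φ, ω′)_{I_j}` equals the difference of the values
of `ωφ` at the ends of `I_j`. What is left of the cell-`j` terms of `L^c(ω,φ) + L^c(φ,ω)` is then
`S_{j+1/2} − S_{j−1/2}` with `S = (ω⁺φ⁻ + φ⁺ω⁻)/2`, and the periodic sum of these differences
vanishes.
-/

theorem Polynomial.integral_eval_mul_derivative_add (p q : ℝ[X]) (u v : ℝ) :
    ((∫ t in u..v, p.eval t * (derivative q).eval t) +
        ∫ t in u..v, q.eval t * (derivative p).eval t) =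
      p.eval v * q.eval v - p.eval u * q.eval u := by
  have hparts := intervalIntegral.integral_mul_deriv_eq_deriv_mul (a := u) (b := v)
    (fun t _ => p.hasDerivAt t) (fun t _ => q.hasDerivAt t)
    ((derivative p).continuous.intervalIntegrable u v)
    ((derivative q).continuous.intervalIntegrable u v)
  simp only [hparts, mul_comm (q.eval _)]
  ring

theorem Fintype.sum_sub_comp_sub_eq_zero {ι M : Type*} [Fintype ι] [AddGroup ι]
    [AddCommGroup M] (f : ι → M) (c : ι) : ∑ i, (f i - f (i - c)) = 0 := by
  rw [Finset.sum_sub_distrib, sub_eq_zero]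
  exact (Fintype.sum_equiv (Equiv.subRight c) _ _ fun _ => rfl).symm

namespace FW

variable {N : ℕ} [NeZero N] (x : Fin (N + 1) → ℝ) (ω φ : Fin N → ℝ[X])

theorem trP_sub_one (j : Fin N) : trP x ω (j - 1) = (ω j).eval (x j.castSucc) := by
  simp [trP]

theorem ipj_derivative_add_ipj_derivative (j : Fin N) :
    ipj x ω j (derivative (φ j)) + ipj x φ j (derivative (ω j)) =
      trM x ω j * trM x φ j - trP x ω (j - 1) * trP x φ (j - 1) := by
  rw [trP_sub_one, trP_sub_one]
  exact Polynomial.integral_eval_mul_derivative_add _ _ _ _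

def centralCrossTrace (j : Fin N) : ℝ :=
  (trP x ω j * trM x φ j + trP x φ j * trM x ω j) / 2

theorem Lc_cell_add_Lc_cell (j : Fin N) :
    (-ipj x ω j (derivative (φ j)) + bdj x (trA x ω) j (φ j)) +
        (-ipj x φ j (derivative (ω j)) + bdj x (trA x φ) j (ω j)) =
      centralCrossTrace x ω φ j - centralCrossTrace x ω φ (j - 1) := by
  have hparts := ipj_derivative_add_ipj_derivative x ω φ j
  simp only [bdj, trA, centralCrossTrace, ← trP_sub_one x _ j]
  unfold trM at hparts ⊢
  linear_combination -hparts

end FW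

theorem stmt3_general {N : ℕ} [NeZero N] (x : Fin (N + 1) → ℝ) (ω φ : Fin N → Polynomial ℝ) :
    FW.Lc x ω φ + FW.Lc x φ ω = 0 := by
  rw [FW.Lc, FW.Lc, ← Finset.sum_add_distrib]
  simp only [FW.Lc_cell_add_Lc_cell]
  exact Fintype.sum_sub_comp_sub_eq_zero _ 1

theorem stmt3 {N : ℕ} [NeZero N] (hN : 1 ≤ N) (a b : ℝ) (hab : a < b)
    (x : Fin (N + 1) → ℝ) (hx : StrictMono x) (hxa : x 0 = a) (hxb : x (Fin.last N) = b)
    (k : ℕ) (ω φ : Fin N → Polynomial ℝ)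
    (hω : FW.memV k ω) (hφ : FW.memV k φ) :
    FW.Lc x ω φ + FW.Lc x φ ω = 0 :=
  stmt3_general x ω φ
end
end

section
/- Suppose (u_h, v_h, q_h) solves the dissipative semi-discrete LDG Scheme D1 on [0,T]. Then for every t ∈ [0,T] the exact energy balance holds: ∫_a^b (∂_t u_h) u_h dx + N^d(u_h, u_h) + (1/2) Σ_{j=1}^N [ ([u_h]_{j+1/2} + [q_h]_{j+1/2})² + ([v_h]_{j+1/2})² ] = 0, where all traces and jumps are taken at time t. -/
open Polynomial Set

noncomputable section

namespace FWAux
open Polynomial intervalIntegral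

lemma ibp2 (P Q : Polynomial ℝ) (c d : ℝ) :
    (∫ t in c..d, (derivative P).eval t * Q.eval t)
      + (∫ t in c..d, (derivative Q).eval t * P.eval t)
    = P.eval d * Q.eval d - P.eval c * Q.eval c := by
  have hint : ∀ R S : Polynomial ℝ,
      IntervalIntegrable (fun t => R.eval t * S.eval t) MeasureTheory.volume c d :=
    fun R S => ((R.continuous).mul (S.continuous)).intervalIntegrable _ _
  have key : ∫ t in c..d, deriv (fun s => (P*Q).eval s) t = (P*Q).eval d - (P*Q).eval c := by
    apply integral_deriv_eq_sub (fun t _ => ((P*Q).hasDerivAt t).differentiableAt)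
    have : (deriv fun s => (P*Q).eval s) = fun t => (derivative (P*Q)).eval t := by
      funext t; exact ((P*Q).hasDerivAt t).deriv
    rw [this]
    simpa [derivative_mul, mul_comm] using (hint (derivative P) Q).add (hint (derivative Q) P)
  have e : (deriv fun s => (P*Q).eval s)
      = fun t => (derivative P).eval t * Q.eval t + (derivative Q).eval t * P.eval t := by
    funext t
    rw [((P*Q).hasDerivAt t).deriv]
    simp [derivative_mul]; ring
  rw [e] at key
  rw [intervalIntegral.integral_add (hint _ _) (hint _ _)] at key
  simpa using key

variable {N : ℕ} [NeZero N]

lemma sum_shift (g : Fin N → ℝ) : ∑ j, g (j - 1) = ∑ j, g j :=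
  Equiv.sum_comp (Equiv.subRight (1 : Fin N)) g

lemma trP_sub_one (x : Fin (N+1) → ℝ) (φ : Fin N → Polynomial ℝ) (j : Fin N) :
    FW.trP x φ (j - 1) = (φ j).eval (x j.castSucc) := by
  simp [FW.trP, sub_add_cancel]

-- Lm expansion
lemma Lm_eq (x : Fin (N+1) → ℝ) (ω φ : Fin N → Polynomial ℝ) :
    FW.Lm x ω φ
      = (∑ j, ∫ t in (x j.castSucc)..(x j.succ), (derivative (ω j)).eval t * (φ j).eval t)
        + ∑ j, FW.jmp x ω j * FW.trP x φ j := by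
  have key : ∀ j : Fin N, -(FW.ipj x ω j (derivative (φ j))) + FW.bdj x (FW.trM x ω) j (φ j)
      = (∫ t in (x j.castSucc)..(x j.succ), (derivative (ω j)).eval t * (φ j).eval t)
        + FW.jmp x ω (j-1) * FW.trP x φ (j-1) := by
    intro j
    have hibp := ibp2 (ω j) (φ j) (x j.castSucc) (x j.succ)
    have hip : FW.ipj x ω j (derivative (φ j))
        = ∫ t in (x j.castSucc)..(x j.succ), (derivative (φ j)).eval t * (ω j).eval t := by
      unfold FW.ipj
      exact intervalIntegral.integral_congr fun t _ => mul_comm _ _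
    rw [hip]
    have hB := trP_sub_one x φ j
    have hBw := trP_sub_one x ω j
    unfold FW.bdj FW.jmp FW.trM
    rw [hB, hBw]
    linear_combination -hibp
  rw [FW.Lm, Finset.sum_congr rfl (fun j _ => key j), Finset.sum_add_distrib,
    sum_shift (fun j => FW.jmp x ω j * FW.trP x φ j)]

lemma Lp_eq (x : Fin (N+1) → ℝ) (ω φ : Fin N → Polynomial ℝ) :
    FW.Lp x ω φ
      = (∑ j, ∫ t in (x j.castSucc)..(x j.succ), (derivative (ω j)).eval t * (φ j).eval t)
        + ∑ j, FW.jmp x ω j * FW.trM x φ j := by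
  have key : ∀ j : Fin N, -(FW.ipj x ω j (derivative (φ j))) + FW.bdj x (FW.trP x ω) j (φ j)
      = (∫ t in (x j.castSucc)..(x j.succ), (derivative (ω j)).eval t * (φ j).eval t)
        + FW.jmp x ω j * FW.trM x φ j := by
    intro j
    have hibp := ibp2 (ω j) (φ j) (x j.castSucc) (x j.succ)
    have hip : FW.ipj x ω j (derivative (φ j))
        = ∫ t in (x j.castSucc)..(x j.succ), (derivative (φ j)).eval t * (ω j).eval t := by
      unfold FW.ipj
      exact intervalIntegral.integral_congr fun t _ => mul_comm _ _
    rw [hip]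
    have hBw := trP_sub_one x ω j
    unfold FW.bdj FW.jmp FW.trM
    rw [hBw]
    linear_combination -hibp
  rw [FW.Lp, Finset.sum_congr rfl (fun j _ => key j), Finset.sum_add_distrib]

lemma sum_ibp (x : Fin (N+1) → ℝ) (ω φ : Fin N → Polynomial ℝ) :
    (∑ j, ∫ t in (x j.castSucc)..(x j.succ), (derivative (ω j)).eval t * (φ j).eval t)
      + (∑ j, ∫ t in (x j.castSucc)..(x j.succ), (derivative (φ j)).eval t * (ω j).eval t)
    = ∑ j, (FW.trM x ω j * FW.trM x φ j - FW.trP x ω j * FW.trP x φ j) := by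
  rw [← Finset.sum_add_distrib]
  have key : ∀ j : Fin N,
      (∫ t in (x j.castSucc)..(x j.succ), (derivative (ω j)).eval t * (φ j).eval t)
        + (∫ t in (x j.castSucc)..(x j.succ), (derivative (φ j)).eval t * (ω j).eval t)
      = FW.trM x ω j * FW.trM x φ j - FW.trP x ω (j-1) * FW.trP x φ (j-1) := by
    intro j
    rw [trP_sub_one, trP_sub_one]
    exact ibp2 (ω j) (φ j) _ _
  rw [Finset.sum_congr rfl (fun j _ => key j), Finset.sum_sub_distrib,
    sum_shift (fun j => FW.trP x ω j * FW.trP x φ j), ← Finset.sum_sub_distrib]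

lemma Lm_anti (x : Fin (N+1) → ℝ) (ω φ : Fin N → Polynomial ℝ) :
    FW.Lm x ω φ + FW.Lp x φ ω = 0 := by
  rw [Lm_eq, Lp_eq]
  have h := sum_ibp x ω φ
  have e1 : (∑ j, FW.jmp x ω j * FW.trP x φ j) + (∑ j, FW.jmp x φ j * FW.trM x ω j)
      + (∑ j : Fin N, (FW.trM x ω j * FW.trM x φ j - FW.trP x ω j * FW.trP x φ j)) = 0 := by
    rw [← Finset.sum_add_distrib, ← Finset.sum_add_distrib]
    apply Finset.sum_eq_zero
    intro j _
    simp only [FW.jmp]; ring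
  linarith

lemma Lm_jump (x : Fin (N+1) → ℝ) (ω φ : Fin N → Polynomial ℝ) :
    FW.Lm x ω φ + FW.Lm x φ ω = ∑ j, FW.jmp x ω j * FW.jmp x φ j := by
  rw [Lm_eq, Lm_eq]
  have h := sum_ibp x ω φ
  have e1 : (∑ j, FW.jmp x ω j * FW.trP x φ j) + (∑ j, FW.jmp x φ j * FW.trP x ω j)
      + (∑ j : Fin N, (FW.trM x ω j * FW.trM x φ j - FW.trP x ω j * FW.trP x φ j))
      = ∑ j, FW.jmp x ω j * FW.jmp x φ j := by
    rw [← Finset.sum_add_distrib, ← Finset.sum_add_distrib]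
    apply Finset.sum_congr rfl
    intro j _
    simp only [FW.jmp]; ring
  linarith

end FWAux

theorem stmt11 {N : ℕ} [NeZero N] (hN : 1 ≤ N) (a b : ℝ) (hab : a < b)
    (x : Fin (N + 1) → ℝ) (hx : StrictMono x) (hxa : x 0 = a) (hxb : x (Fin.last N) = b)
    (k : ℕ) (p : ℕ) (hp : 2 ≤ p) (T : ℝ) (hT : 0 < T)
    (u u' v q : ℝ → Fin N → Polynomial ℝ)
    (hdeg : ∀ t ∈ Set.Icc (0:ℝ) T,
      FW.memV k (u t) ∧ FW.memV k (u' t) ∧ FW.memV k (v t) ∧ FW.memV k (q t))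
    (hder : ∀ t ∈ Set.Icc (0:ℝ) T, ∀ (j : Fin N) (m : ℕ),
      HasDerivWithinAt (fun σ => (u σ j).coeff m) ((u' t j).coeff m) (Set.Icc (0:ℝ) T) t)
    (heq1 : ∀ t ∈ Set.Icc (0:ℝ) T, ∀ (j : Fin N), ∀ φ : Polynomial ℝ,
      φ.degree ≤ (k : WithBot ℕ) →
      FW.ipj x (u' t) j φ
        + FW.bdj x (fun i => FW.godunov (fun w => w ^ p / (p : ℝ))
            (FW.trM x (u t) i) (FW.trP x (u t) i)) j φ
        - FW.ipfj x (fun w => w ^ p / (p : ℝ)) (u t) j (Polynomial.derivative φ)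
        + FW.ipj x (v t) j φ = 0)
    (heq2 : ∀ t ∈ Set.Icc (0:ℝ) T, ∀ (j : Fin N), ∀ φ : Polynomial ℝ,
      φ.degree ≤ (k : WithBot ℕ) →
      FW.ipj x (v t) j φ - FW.bdj x (FW.trM x (q t)) j φ
          + FW.ipj x (q t) j (Polynomial.derivative φ)
        = FW.bdj x (FW.trM x (u t)) j φ - FW.ipj x (u t) j (Polynomial.derivative φ))
    (heq3 : ∀ t ∈ Set.Icc (0:ℝ) T, ∀ (j : Fin N), ∀ φ : Polynomial ℝ,
      φ.degree ≤ (k : WithBot ℕ) →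
      FW.ipj x (q t) j φ
        = FW.bdj x (FW.trP x (v t)) j φ - FW.ipj x (v t) j (Polynomial.derivative φ)) :
    ∀ t ∈ Set.Icc (0:ℝ) T,
      (∑ j : Fin N, FW.ipj x (u' t) j (u t j))
        + FW.Nd x (fun w => w ^ p / (p : ℝ)) (u t) (u t)
        + (1/2) * (∑ j : Fin N,
            ((FW.jmp x (u t) j + FW.jmp x (q t) j) ^ 2 + (FW.jmp x (v t) j) ^ 2)) = 0 := by
  intro t ht
  obtain ⟨hu, hu', hv, hq⟩ := hdeg t ht
  -- Sum of equation (i) tested with φ = u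
  have h1 : (∑ j : Fin N, FW.ipj x (u' t) j (u t j))
      + FW.Nd x (fun w => w ^ p / (p : ℝ)) (u t) (u t)
      + ∑ j : Fin N, FW.ipj x (v t) j (u t j) = 0 := by
    rw [FW.Nd, ← Finset.sum_add_distrib, ← Finset.sum_add_distrib]
    apply Finset.sum_eq_zero
    intro j _
    have := heq1 t ht j (u t j) (hu j)
    linarith
  -- Sum of equation (ii) tested with φ = u
  have h2u : (∑ j : Fin N, FW.ipj x (v t) j (u t j))
      = FW.Lm x (q t) (u t) + FW.Lm x (u t) (u t) := by
    rw [FW.Lm, FW.Lm, ← Finset.sum_add_distrib]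
    apply Finset.sum_congr rfl
    intro j _
    have := heq2 t ht j (u t j) (hu j)
    linarith
  -- Sum of equation (ii) tested with φ = q
  have h2q : (∑ j : Fin N, FW.ipj x (v t) j (q t j))
      = FW.Lm x (q t) (q t) + FW.Lm x (u t) (q t) := by
    rw [FW.Lm, FW.Lm, ← Finset.sum_add_distrib]
    apply Finset.sum_congr rfl
    intro j _
    have := heq2 t ht j (q t j) (hq j)
    linarith
  -- Sum of equation (iii) tested with φ = v
  have h3v : (∑ j : Fin N, FW.ipj x (q t) j (v t j)) = FW.Lp x (v t) (v t) := by
    rw [FW.Lp]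
    apply Finset.sum_congr rfl
    intro j _
    have := heq3 t ht j (v t j) (hv j)
    linarith
  have hsym : (∑ j : Fin N, FW.ipj x (v t) j (q t j))
      = ∑ j : Fin N, FW.ipj x (q t) j (v t j) := by
    apply Finset.sum_congr rfl
    intro j _
    exact intervalIntegral.integral_congr fun s _ => mul_comm _ _
  have jU := FWAux.Lm_jump x (u t) (u t)
  have jV := FWAux.Lm_jump x (v t) (v t)
  have jQ := FWAux.Lm_jump x (q t) (q t)
  have jUQ := FWAux.Lm_jump x (u t) (q t)
  have aV := FWAux.Lm_anti x (v t) (v t)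
  have hsum : (∑ j : Fin N, ((FW.jmp x (u t) j + FW.jmp x (q t) j) ^ 2 + (FW.jmp x (v t) j) ^ 2))
      = (∑ j : Fin N, FW.jmp x (u t) j * FW.jmp x (u t) j)
        + 2 * (∑ j : Fin N, FW.jmp x (u t) j * FW.jmp x (q t) j)
        + (∑ j : Fin N, FW.jmp x (q t) j * FW.jmp x (q t) j)
        + (∑ j : Fin N, FW.jmp x (v t) j * FW.jmp x (v t) j) := by
    rw [Finset.mul_sum, ← Finset.sum_add_distrib, ← Finset.sum_add_distrib,
      ← Finset.sum_add_distrib]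
    apply Finset.sum_congr rfl
    intro j _
    ring
  linarith
end
end

section
/- Let T > 0, C > 0, C* > 0 be reals, μ̃ a real number, and k a positive integer with 2k + μ̃ > 3. Then there exist h₀ ∈ (0,1] and C̃ > 0, depending only on T, C, C*, k, μ̃, such that the following holds: for every h ∈ (0, h₀] and every differentiable function y : [0,T] → [0,∞) satisfying y(0) ≤ C h^{2k+μ̃} and y′(t) ≤ C* y(t) + C h^{2k+μ̃} + C h^{−3/2} y(t)^{3/2} for all t ∈ [0,T], one has y(t) ≤ C̃ h^{2k+μ̃} for all t ∈ [0,T]. -/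
open Polynomial Set

noncomputable section

/-!
As long as `y ≤ Ct h^(2k+μ)`, the superlinear term is absorbed into the linear one:
`C h^(-3/2) y^(3/2) ≤ C Ct^(1/2) h^((2k+μ-3)/2) y ≤ y` once `h` is small, since `2k + μ > 3`.
So wherever `y` could touch the barrier `2 C h^(2k+μ) exp ((C* + 2) t)` its derivative is strictly
smaller than the barrier's; hence `y` stays below the barrier, which itself stays below
`Ct h^(2k+μ)` for `Ct = 2 C exp ((C* + 2) T)`.
-/

open Real

theorem image_le_of_derivWithin_lt_deriv_boundary {f B B' : ℝ → ℝ} {a b : ℝ}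
    (hf : DifferentiableOn ℝ f (Icc a b)) (hB : ∀ x, HasDerivAt B (B' x) x) (ha : f a ≤ B a)
    (bound : ∀ x ∈ Ico a b, f x = B x → derivWithin f (Icc a b) x < B' x) :
    ∀ ⦃x⦄, x ∈ Icc a b → f x ≤ B x :=
  image_le_of_deriv_right_lt_deriv_boundary hf.continuousOn
    (fun x hx => (hf x (Ico_subset_Icc_self hx)).hasDerivWithinAt.mono_of_mem_nhdsWithin
      (Icc_mem_nhdsGE_of_mem hx))
    ha hB bound

theorem le_two_mul_exp_of_derivWithin_le_of_absorb {y g : ℝ → ℝ} {T a δ : ℝ} (ha : 0 ≤ a)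
    (hδ : 0 < δ) (hy : DifferentiableOn ℝ y (Icc 0 T)) (hy0 : y 0 ≤ δ)
    (hg : ∀ v, 0 < v → v ≤ 2 * δ * exp ((a + 2) * T) → g v ≤ v)
    (hy' : ∀ t ∈ Icc 0 T, derivWithin y (Icc 0 T) t ≤ a * y t + δ + g (y t)) :
    ∀ t ∈ Icc 0 T, y t ≤ 2 * δ * exp ((a + 2) * t) := by
  have hB (t : ℝ) : HasDerivAt (fun s => 2 * δ * exp ((a + 2) * s))
      ((a + 2) * (2 * δ * exp ((a + 2) * t))) t := by
    refine (((hasDerivAt_id t).const_mul (a + 2)).exp.const_mul (2 * δ)).congr_deriv ?_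
    simp only [id, mul_one]
    ring
  refine image_le_of_derivWithin_lt_deriv_boundary hy hB
    (by simp only [mul_zero, exp_zero, mul_one]; linarith) ?_
  intro t ht hyt
  have hexp : 1 ≤ exp ((a + 2) * t) := one_le_exp (by nlinarith [ht.1])
  have hδy : δ < y t := by rw [hyt]; nlinarith
  have hgt : g (y t) ≤ y t := hg _ (hδ.trans hδy) <| by
    rw [hyt]
    exact mul_le_mul_of_nonneg_left (exp_le_exp.2 (by nlinarith [ht.2])) (by positivity)
  calc derivWithin y (Icc 0 T) t ≤ a * y t + δ + g (y t) := hy' t (Ico_subset_Icc_self ht)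
    _ < a * y t + y t + y t := by linarith
    _ = (a + 2) * (2 * δ * exp ((a + 2) * t)) := by rw [hyt]; ring

theorem mul_rpow_three_halves_le_self {c v : ℝ} (hv : 0 ≤ v) (hcv : c * v ^ (1 / 2 : ℝ) ≤ 1) :
    c * v ^ (3 / 2 : ℝ) ≤ v := by
  have hsplit : v ^ (3 / 2 : ℝ) = v ^ (1 / 2 : ℝ) * v := by
    rw [← rpow_add_one' hv (by norm_num)]; norm_num
  calc c * v ^ (3 / 2 : ℝ) = c * v ^ (1 / 2 : ℝ) * v := by rw [hsplit]; ring
    _ ≤ 1 * v := mul_le_mul_of_nonneg_right hcv hv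
    _ = v := one_mul v

theorem exists_forall_mul_rpow_le_one {D e : ℝ} (hD : 0 < D) (he : 0 < e) :
    ∃ h₀ ∈ Ioc (0 : ℝ) 1, ∀ h ∈ Ioc (0 : ℝ) h₀, D * h ^ e ≤ 1 := by
  refine ⟨min 1 (D⁻¹ ^ e⁻¹), ⟨by positivity, min_le_left _ _⟩, fun h hh => ?_⟩
  have hhe : h ^ e ≤ D⁻¹ := by
    calc h ^ e ≤ (D⁻¹ ^ e⁻¹) ^ e := by
          gcongr
          · exact hh.1.le
          · exact hh.2.trans (min_le_right _ _)
      _ = D⁻¹ := rpow_inv_rpow (by positivity) he.ne'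
  calc D * h ^ e ≤ D * D⁻¹ := by gcongr
    _ = 1 := mul_inv_cancel₀ hD.ne'

theorem rpow_neg_three_halves_mul_sqrt_mul_rpow {h c α : ℝ} (hh : 0 < h) (hc : 0 ≤ c) :
    h ^ (-(3 / 2) : ℝ) * (c * h ^ α) ^ (1 / 2 : ℝ) = c ^ (1 / 2 : ℝ) * h ^ ((α - 3) / 2) := by
  rw [mul_rpow hc (by positivity), ← rpow_mul hh.le, mul_left_comm, ← rpow_add hh]
  ring_nf

theorem stmt14_general (T C Cs μ : ℝ) (hC : 0 < C) (hCs : 0 < Cs)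
    (k : ℕ) (hkμ : 3 < 2 * (k : ℝ) + μ) :
    ∃ h₀ : ℝ, h₀ ∈ Set.Ioc (0:ℝ) 1 ∧ ∃ Ct : ℝ, 0 < Ct ∧
      ∀ h : ℝ, h ∈ Set.Ioc (0:ℝ) h₀ →
      ∀ y : ℝ → ℝ, DifferentiableOn ℝ y (Set.Icc 0 T) →
        (∀ t ∈ Set.Icc (0:ℝ) T, 0 ≤ y t) →
        y 0 ≤ C * h ^ (2 * (k : ℝ) + μ) →
        (∀ t ∈ Set.Icc (0:ℝ) T, derivWithin y (Set.Icc 0 T) t ≤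
          Cs * y t + C * h ^ (2 * (k : ℝ) + μ)
            + C * h ^ (-(3/2) : ℝ) * (y t) ^ ((3:ℝ)/2)) →
        ∀ t ∈ Set.Icc (0:ℝ) T, y t ≤ Ct * h ^ (2 * (k : ℝ) + μ) := by
  set α := 2 * (k : ℝ) + μ
  set Ct := 2 * C * exp ((Cs + 2) * T)
  obtain ⟨h₀, hh₀, hsmall⟩ :=
    exists_forall_mul_rpow_le_one (D := C * Ct ^ (1 / 2 : ℝ)) (e := (α - 3) / 2)
      (by positivity) (by linarith)
  refine ⟨h₀, hh₀, Ct, by positivity, fun h hh y hy _ hy0 hy' t ht => ?_⟩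
  have hh0 : 0 < h := hh.1
  have habsorb (v : ℝ) (hv : 0 < v) (hvM : v ≤ 2 * (C * h ^ α) * exp ((Cs + 2) * T)) :
      C * h ^ (-(3 / 2) : ℝ) * v ^ (3 / 2 : ℝ) ≤ v := by
    refine mul_rpow_three_halves_le_self hv.le ?_
    have hvCt : v ≤ Ct * h ^ α := by linarith
    calc C * h ^ (-(3 / 2) : ℝ) * v ^ (1 / 2 : ℝ)
        ≤ C * (h ^ (-(3 / 2) : ℝ) * (Ct * h ^ α) ^ (1 / 2 : ℝ)) := by
          rw [← mul_assoc]; gcongr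
      _ = C * Ct ^ (1 / 2 : ℝ) * h ^ ((α - 3) / 2) := by
          rw [rpow_neg_three_halves_mul_sqrt_mul_rpow hh0 (by positivity)]; ring
      _ ≤ 1 := hsmall h hh
  calc y t ≤ 2 * (C * h ^ α) * exp ((Cs + 2) * t) :=
        le_two_mul_exp_of_derivWithin_le_of_absorb hCs.le (by positivity) hy hy0 habsorb hy' t ht
    _ ≤ 2 * (C * h ^ α) * exp ((Cs + 2) * T) := by gcongr; exact ht.2
    _ = Ct * h ^ α := by ring

theorem stmt14 (T C Cs μ : ℝ) (hT : 0 < T) (hC : 0 < C) (hCs : 0 < Cs)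
    (k : ℕ) (hk : 0 < k) (hkμ : 3 < 2 * (k : ℝ) + μ) :
    ∃ h₀ : ℝ, h₀ ∈ Set.Ioc (0:ℝ) 1 ∧ ∃ Ct : ℝ, 0 < Ct ∧
      ∀ h : ℝ, h ∈ Set.Ioc (0:ℝ) h₀ →
      ∀ y : ℝ → ℝ, DifferentiableOn ℝ y (Set.Icc 0 T) →
        (∀ t ∈ Set.Icc (0:ℝ) T, 0 ≤ y t) →
        y 0 ≤ C * h ^ (2 * (k : ℝ) + μ) →
        (∀ t ∈ Set.Icc (0:ℝ) T, derivWithin y (Set.Icc 0 T) t ≤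
          Cs * y t + C * h ^ (2 * (k : ℝ) + μ)
            + C * h ^ (-(3/2) : ℝ) * (y t) ^ ((3:ℝ)/2)) →
        ∀ t ∈ Set.Icc (0:ℝ) T, y t ≤ Ct * h ^ (2 * (k : ℝ) + μ) :=
  stmt14_general T C Cs μ hC hCs k hkμ
end
end
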